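/- Let q be an odd prime power with q ≡ 3 (mod 4) and q ≡ 2 (mod 3). Then the block matrix H₃(q) = [[I_{q+1} + S_q, I_{q+1} + S_q], [I_{q+1} − S_q, −I_{q+1} + S_q]] is a Hadamard matrix of order 2q+2, and every row of H₃(q), reduced modulo 3, is a codeword of the Pless symmetry code C(q). -/

import Mathlib

open Matrix Finset

/-- The Pless matrix `S_q`, with rows and columns indexed by `GF(q) ∪ {∞}`
(`none` playing the role of `∞`), built from the quadratic character of `GF(q)`. -/
def Smat (F : Type) [Field F] [Fintype F] [DecidableEq F] :
    Matrix (Option F) (Option F) ℤ := fun i j =>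
  match i, j with
  | none, none => 0
  | none, some _ => 1
  | some _, none => quadraticChar F (-1)
  | some a, some b => quadraticChar F (a - b)

/-- The row of the generator matrix `(I | S_q)` of the Pless symmetry code,
reduced modulo 3, indexed by `i : Option F`. -/
def genRowC (F : Type) [Field F] [Fintype F] [DecidableEq F] (i : Option F) :
    (Option F ⊕ Option F) → ZMod 3 := fun j =>
  match j with
  | Sum.inl k => if i = k then 1 else 0
  | Sum.inr k => ((Smat F i k : ℤ) : ZMod 3)

/-- The Pless symmetry code `C(q)`: the ternary code of length `2q+2` spanned by
the rows of `(I | S_q)` reduced modulo 3. -/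
def Ccode (F : Type) [Field F] [Fintype F] [DecidableEq F] :
    Submodule (ZMod 3) ((Option F ⊕ Option F) → ZMod 3) :=
  Submodule.span (ZMod 3) (Set.range (genRowC F))

/-- The Hadamard matrix `H₃(q) = [[I + S_q, I + S_q], [I − S_q, −I + S_q]]`. -/
def H3mat (F : Type) [Field F] [Fintype F] [DecidableEq F] :
    Matrix (Option F ⊕ Option F) (Option F ⊕ Option F) ℤ :=
  Matrix.fromBlocks (1 + Smat F) (1 + Smat F) (1 - Smat F) (-1 + Smat F)

/-! Since `q ≡ 3 (mod 4)`, `χ(-1) = -1` and `S = S_q` is skew-symmetric, while the Jacobi sum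
`J(χ, χ) = -χ(-1)` gives `∑_b χ(a - b) χ(c - b) = -1` for `a ≠ c`; hence `S Sᵀ = q I` and
`S² = -q I`. The Hadamard property of `H₃(q)` is then a block computation. Modulo 3, `q ≡ 2`
turns this into `S² = I`, so that `H₃(q) ≡ [[I + S], [I - S]] · (I | S)`: every row of `H₃(q)`
is a combination of rows of the generator matrix `(I | S)`. -/

theorem mul_apply_mem_span_range_row {m n o R : Type*} [Fintype n] [CommRing R]
    (P : Matrix m n R) (G : Matrix n o R) (i : m) :
    (P * G) i ∈ Submodule.span R (Set.range G.row) := by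
  rw [← range_vecMulLinear, mul_apply_eq_vecMul]
  exact ⟨P i, rfl⟩

section DoubledBlocks

variable {n R : Type*} [DecidableEq n]

theorem isUnit_fromBlocks_apply [Ring R] {S : Matrix n n R} (hdiag : ∀ i, S i i = 0)
    (hoff : ∀ i j, i ≠ j → IsUnit (S i j)) (i j : n ⊕ n) :
    IsUnit (fromBlocks (1 + S) (1 + S) (1 - S) (-1 + S) i j) := by
  rcases i with i | i <;> rcases j with j | j <;>
    (rcases eq_or_ne i j with rfl | hij <;>
      [simp [hdiag]; simp [one_apply_ne hij, hoff i j hij]])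

theorem fromBlocks_mul_transpose [Fintype n] [CommRing R] {S : Matrix n n R} (hT : Sᵀ = -S)
    {c : R} (hS : S * Sᵀ = c • 1) :
    fromBlocks (1 + S) (1 + S) (1 - S) (-1 + S) * (fromBlocks (1 + S) (1 + S) (1 - S) (-1 + S))ᵀ
      = (2 * c + 2) • 1 := by
  have hSS : S * S = -(c • 1) := by rw [← hS, hT, mul_neg, neg_neg]
  rw [fromBlocks_transpose, fromBlocks_multiply, ← fromBlocks_one, fromBlocks_smul]
  simp only [transpose_add, transpose_sub, transpose_neg, transpose_one, hT, smul_zero]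
  congr 1
  · calc (1 + S) * (1 + -S) + (1 + S) * (1 + -S) = 2 • (1 - S * S) := by noncomm_ring
      _ = (2 * c + 2) • 1 := by rw [hSS]; module
  · noncomm_ring
  · noncomm_ring
  · calc (1 - S) * (1 - -S) + (-1 + S) * (-1 + -S) = 2 • (1 - S * S) := by noncomm_ring
      _ = (2 * c + 2) • 1 := by rw [hSS]; module

theorem fromBlocks_eq_fromRows_mul_fromCols [Fintype n] [Ring R] {A : Matrix n n R}
    (hA : A * A = 1) :
    fromBlocks (1 + A) (1 + A) (1 - A) (-1 + A) = fromRows (1 + A) (1 - A) * fromCols 1 A := by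
  rw [fromRows_mul_fromCols]
  congr 1 <;> noncomm_ring [hA]

end DoubledBlocks

section QuadraticChar

variable {F : Type} [Field F] [Fintype F] [DecidableEq F]

theorem quadraticChar_jacobiSum_self (hF : ringChar F ≠ 2) :
    jacobiSum (quadraticChar F) (quadraticChar F) = -quadraticChar F (-1) := by
  rw [← jacobiSum_nontrivial_inv (quadraticChar_ne_one hF), (quadraticChar_isQuadratic F).inv]

theorem sum_quadraticChar_sub (hF : ringChar F ≠ 2) (a : F) :
    ∑ b : F, quadraticChar F (a - b) = 0 := by
  rw [← quadraticChar_sum_zero hF]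
  exact Fintype.sum_equiv (Equiv.subLeft a) _ _ fun _ => rfl

theorem sum_quadraticChar_sub_mul_sub (hF : ringChar F ≠ 2) {a c : F} (hac : a ≠ c) :
    ∑ b : F, quadraticChar F (a - b) * quadraticChar F (c - b) = -1 := by
  have hd : a - c ≠ 0 := sub_ne_zero.2 hac
  have hd2 : quadraticChar F (a - c) ^ 2 = 1 := quadraticChar_sq_one hd
  calc ∑ b : F, quadraticChar F (a - b) * quadraticChar F (c - b)
      = ∑ t : F,
          quadraticChar F (a - (c + (a - c) * t)) * quadraticChar F (c - (c + (a - c) * t)) :=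
        (Fintype.sum_equiv ((Equiv.mulLeft₀ _ hd).trans (Equiv.addLeft c)) _ _ fun _ => rfl).symm
    _ = ∑ t : F, quadraticChar F (-1) * (quadraticChar F t * quadraticChar F (1 - t)) := by
        refine Fintype.sum_congr _ _ fun t => ?_
        rw [show a - (c + (a - c) * t) = (a - c) * (1 - t) by ring,
          show c - (c + (a - c) * t) = -1 * (a - c) * t by ring]
        simp only [map_mul]
        linear_combination
          (quadraticChar F (1 - t) * quadraticChar F (-1) * quadraticChar F t) * hd2
    _ = quadraticChar F (-1) * jacobiSum (quadraticChar F) (quadraticChar F) := by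
        rw [jacobiSum, Finset.mul_sum]
    _ = -1 := by
        rw [quadraticChar_jacobiSum_self hF, mul_neg, ← sq,
          quadraticChar_sq_one (neg_ne_zero.2 one_ne_zero)]

theorem sum_quadraticChar_sub_sq (a : F) :
    ∑ b : F, quadraticChar F (a - b) * quadraticChar F (a - b) = Fintype.card F - 1 := by
  have h : ∀ b,
      quadraticChar F (a - b) * quadraticChar F (a - b) = 1 - if a = b then 1 else 0 := by
    intro b
    split_ifs with hab
    · simp [hab]
    · rw [← sq, quadraticChar_sq_one (sub_ne_zero.2 hab), sub_zero]
  rw [Fintype.sum_congr _ _ h, Finset.sum_sub_distrib]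
  simp

end QuadraticChar

section Pless

variable {F : Type} [Field F] [Fintype F] [DecidableEq F]

theorem Smat_apply_self (i : Option F) : Smat F i i = 0 := by
  cases i <;> simp [Smat]

theorem isUnit_Smat_apply_of_ne {i j : Option F} (h : i ≠ j) : IsUnit (Smat F i j) := by
  rcases i with _ | a <;> rcases j with _ | b
  · exact absurd rfl h
  · exact isUnit_one
  · exact isUnit_one.neg.map (quadraticChar F)
  · exact (sub_ne_zero.2 fun hab => h (congrArg some hab)).isUnit.map (quadraticChar F)

theorem transpose_Smat (hF : ringChar F ≠ 2) (h4 : Fintype.card F % 4 = 3) :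
    (Smat F)ᵀ = -Smat F := by
  have hneg : quadraticChar F (-1) = -1 := by
    rw [quadraticChar_neg_one hF, ZMod.χ₄_nat_mod_four, h4]; decide
  ext (_ | a) (_ | b)
  · simp [Smat]
  · simp [Smat, hneg]
  · simp [Smat, hneg]
  · simp only [transpose_apply, Smat, neg_apply]
    rw [show b - a = -1 * (a - b) by ring, map_mul, hneg, neg_one_mul]

theorem Smat_mul_transpose (hF : ringChar F ≠ 2) :
    Smat F * (Smat F)ᵀ = (Fintype.card F : ℤ) • 1 := by
  have hneg : quadraticChar F (-1) * quadraticChar F (-1) = 1 := by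
    rw [← sq, quadraticChar_sq_one (neg_ne_zero.2 one_ne_zero)]
  ext (_ | a) (_ | c) <;>
    simp only [mul_apply, transpose_apply, Fintype.sum_option, Smat, Matrix.smul_apply,
      one_apply, Option.some.injEq, reduceCtorEq, if_false, smul_zero]
  · simp
  · simp only [one_mul, sum_quadraticChar_sub hF c, zero_mul, add_zero]
  · simp only [mul_one, sum_quadraticChar_sub hF a, mul_zero, add_zero]
  · rw [hneg]
    rcases eq_or_ne a c with rfl | hac
    · simp only [sum_quadraticChar_sub_sq, if_true, smul_eq_mul, mul_one]
      ring
    · simp only [sum_quadraticChar_sub_mul_sub hF hac, hac, if_false, smul_zero]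
      ring

theorem H3mat_map {R : Type*} [Ring R] (f : ℤ →+* R) :
    (H3mat F).map f = fromBlocks (1 + (Smat F).map f) (1 + (Smat F).map f)
      (1 - (Smat F).map f) (-1 + (Smat F).map f) := by
  simp [H3mat, fromBlocks_map, Matrix.map_add, Matrix.map_sub, Matrix.map_neg,
    Matrix.map_one]

theorem genRowC_eq_row :
    genRowC F = (fromCols 1 ((Smat F).map (Int.castRingHom (ZMod 3)))).row := by
  ext i (k | k) <;> simp [genRowC, one_apply]

theorem Smat_map_mul_self (hF : ringChar F ≠ 2) (h4 : Fintype.card F % 4 = 3)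
    (h3 : Fintype.card F % 3 = 2) :
    (Smat F).map (Int.castRingHom (ZMod 3)) * (Smat F).map (Int.castRingHom (ZMod 3)) = 1 := by
  have hSS : Smat F * Smat F = -((Fintype.card F : ℤ) • 1) := by
    rw [← Smat_mul_transpose hF, transpose_Smat hF h4, mul_neg, neg_neg]
  have hq : (Fintype.card F : ZMod 3) = -1 := by
    rw [← ZMod.natCast_mod, h3]; decide
  rw [← Matrix.map_mul, hSS]
  ext i j
  rw [map_apply, neg_apply, Matrix.smul_apply, one_apply, one_apply]
  split_ifs <;> simp [hq]

theorem H3mat_row_mem_Ccode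
    (hS : (Smat F).map (Int.castRingHom (ZMod 3)) * (Smat F).map (Int.castRingHom (ZMod 3)) = 1)
    (i : Option F ⊕ Option F) : (fun j => ((H3mat F i j : ℤ) : ZMod 3)) ∈ Ccode F := by
  set S := (Smat F).map (Int.castRingHom (ZMod 3))
  have h := mul_apply_mem_span_range_row (fromRows (1 + S) (1 - S))
    (fromCols (1 : Matrix (Option F) (Option F) (ZMod 3)) S) i
  rwa [← fromBlocks_eq_fromRows_mul_fromCols hS, ← H3mat_map, ← genRowC_eq_row] at h

end Pless

/-- For an odd prime power `q ≡ 3 (mod 4)` with `q ≡ 2 (mod 3)`, the matrix `H₃(q)`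
is a Hadamard matrix of order `2q+2`, and each of its rows, reduced modulo 3,
is a codeword of the Pless symmetry code `C(q)`. -/
theorem stmt_3 (q : ℕ) (h4 : q % 4 = 3) (h3 : q % 3 = 2)
    (F : Type) [Field F] [Fintype F] [DecidableEq F] (hF : Fintype.card F = q) :
    (∀ i j, H3mat F i j = 1 ∨ H3mat F i j = -1) ∧
    H3mat F * (H3mat F)ᵀ =
      ((2 * q + 2 : ℕ) : ℤ) • (1 : Matrix (Option F ⊕ Option F) (Option F ⊕ Option F) ℤ) ∧
    (∀ i, (fun j => ((H3mat F i j : ℤ) : ZMod 3)) ∈ Ccode F) := by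
  subst hF
  have hF2 : ringChar F ≠ 2 := fun h => by
    have := FiniteField.even_card_iff_char_two.mp h
    omega
  refine ⟨fun i j => Int.isUnit_iff.mp ?_, ?_, H3mat_row_mem_Ccode (Smat_map_mul_self hF2 h4 h3)⟩
  · exact isUnit_fromBlocks_apply Smat_apply_self (fun _ _ => isUnit_Smat_apply_of_ne) i j
  · rw [H3mat, fromBlocks_mul_transpose (transpose_Smat hF2 h4) (Smat_mul_transpose hF2)]
    push_cast
    ring_nf
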